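/- arXiv:1710.10927 — 2 statements merged into one kernel-verified Lean document; each statement's English description precedes it below -/
import Mathlib

section
/- There exists a computable equivalence structure that is computably categorical but not computably bi-embeddably categorical. -/
/-- The equivalence class of `a` under the relation `E`. -/
def classOf (E : ℕ → ℕ → Prop) (a : ℕ) : Set ℕ := {x | E x a}

/-- `f` is an embedding of the equivalence structure `(ℕ, E)` into `(ℕ, E')`. -/
def IsEmb (E E' : ℕ → ℕ → Prop) (f : ℕ → ℕ) : Prop :=
  Function.Injective f ∧ ∀ x y, E x y ↔ E' (f x) (f y)

/-- Bi-embeddability of equivalence structures on ℕ. -/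
def BiEmb (E E' : ℕ → ℕ → Prop) : Prop :=
  (∃ f, IsEmb E E' f) ∧ (∃ g, IsEmb E' E g)

/-- `E` is a computable (decidable by a total computable function) binary relation. -/
def CompDecRel (E : ℕ → ℕ → Prop) : Prop :=
  ∃ f : ℕ → ℕ → Bool, Computable₂ f ∧ ∀ x y, E x y ↔ f x y = true

/-- The collection of infinite equivalence classes of `E`. -/
def InfClasses (E : ℕ → ℕ → Prop) : Set (Set ℕ) :=
  {C | (∃ a, C = classOf E a) ∧ C.Infinite}

/-- The collection of equivalence classes of `E` of size exactly `m`. -/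
def sizeClasses (E : ℕ → ℕ → Prop) (m : ℕ) : Set (Set ℕ) :=
  {C | (∃ a, C = classOf E a) ∧ C.Finite ∧ C.ncard = m}

/-- `E` has bounded character: some `k` bounds the size of every finite class. -/
def BoundedCharacter (E : ℕ → ℕ → Prop) : Prop :=
  ∃ k, ∀ a, (classOf E a).Finite → (classOf E a).ncard ≤ k

/-- `E` has unbounded character: finite classes of arbitrarily large size. -/
def UnboundedCharacter (E : ℕ → ℕ → Prop) : Prop :=
  ∀ k, ∃ a, (classOf E a).Finite ∧ k < (classOf E a).ncard

/-- `E` is computably bi-embeddably categorical. -/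
def CompBiembCat (E : ℕ → ℕ → Prop) : Prop :=
  ∀ E' : ℕ → ℕ → Prop, Equivalence E' → CompDecRel E' → BiEmb E E' →
    (∃ f, Computable f ∧ IsEmb E E' f) ∧ (∃ g, Computable g ∧ IsEmb E' E g)

/-- `f` is an isomorphism of `(ℕ, E)` onto `(ℕ, E')`. -/
def IsIso (E E' : ℕ → ℕ → Prop) (f : ℕ → ℕ) : Prop :=
  Function.Bijective f ∧ ∀ x y, E x y ↔ E' (f x) (f y)

/-- `E` is computably categorical. -/
def CompCat (E : ℕ → ℕ → Prop) : Prop :=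
  ∀ E' : ℕ → ℕ → Prop, Equivalence E' → CompDecRel E' → (∃ f, IsIso E' E f) →
    ∃ f, Computable f ∧ IsIso E' E f

/-- `W e` is the domain of the `e`-th partial computable function. -/
def W (e : ℕ) : Set ℕ :=
  {x | ((Denumerable.ofNat Nat.Partrec.Code e).eval x).Dom}


open Computable in
/-- bounded counting -/
def bc (p : ℕ → ℕ → Bool) (a n : ℕ) : ℕ :=
  Nat.rec 0 (fun m ih => ih + cond (p a m) 1 0) n

theorem bc_zero (p : ℕ → ℕ → Bool) (a : ℕ) : bc p a 0 = 0 := rfl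
theorem bc_succ (p : ℕ → ℕ → Bool) (a n : ℕ) :
    bc p a (n+1) = bc p a n + cond (p a n) 1 0 := rfl

theorem bc_computable {p : ℕ → ℕ → Bool} (hp : Computable₂ p) : Computable₂ (bc p) := by
  have : Computable fun x : ℕ × ℕ =>
      Nat.rec (motive := fun _ => ℕ) 0
        (fun y IH => IH + cond (p x.1 y) 1 0) x.2 := by
    refine Computable.nat_rec (f := fun x : ℕ × ℕ => x.2) (g := fun _ : ℕ × ℕ => (0 : ℕ))
      (h := fun x q => q.2 + cond (p x.1 q.1) 1 0) Computable.snd (Computable.const 0) ?_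
    have hcond : Computable fun q : (ℕ × ℕ) × ℕ × ℕ => cond (p q.1.1 q.2.1) 1 0 :=
      Computable.cond (hp.comp (Computable.fst.comp Computable.fst)
        (Computable.fst.comp Computable.snd)) (Computable.const 1) (Computable.const 0)
    exact (Primrec.nat_add.to_comp.comp (Computable.snd.comp Computable.snd) hcond).to₂
  exact this.to₂

theorem bc_eq_count (p : ℕ → ℕ → Bool) (a n : ℕ) :
    bc p a n = Nat.count (fun m => p a m = true) n := by
  induction n with
  | zero => exact bc_zero p a
  | succ n ih =>
    rw [bc_succ, Nat.count_succ, ih]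
    cases h : p a n <;> simp [h]

theorem bc_eq_zero_iff (p : ℕ → ℕ → Bool) (a n : ℕ) :
    bc p a n = 0 ↔ ∀ m < n, p a m = false := by
  induction n with
  | zero => exact iff_of_true (bc_zero p a) (by omega)
  | succ n ih =>
    rw [bc_succ]
    cases h : p a n with
    | false =>
      simp only [cond_false, Nat.add_zero, ih]
      constructor
      · intro H m hm
        rcases Nat.lt_succ_iff_lt_or_eq.1 hm with hm | rfl
        · exact H m hm
        · exact h
      · intro H m hm; exact H m (Nat.lt_succ_of_lt hm)
    | true =>
      simp only [cond_true]
      constructor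
      · omega
      · intro H; exact absurd h (by rw [H n (Nat.lt_succ_self n)]; simp)

/-- bounded exists -/
def bex' (p : ℕ → ℕ → Bool) (a n : ℕ) : Bool := bc p a n != 0

/-- bounded forall -/
def ball' (p : ℕ → ℕ → Bool) (a n : ℕ) : Bool := bc (fun a m => ! p a m) a n == 0

theorem bex'_iff (p : ℕ → ℕ → Bool) (a n : ℕ) :
    bex' p a n = true ↔ ∃ m < n, p a m = true := by
  unfold bex'
  rw [bne_iff_ne, Ne, bc_eq_zero_iff]
  push_neg
  constructor
  · rintro ⟨m, hm, h⟩; exact ⟨m, hm, by simpa using h⟩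
  · rintro ⟨m, hm, h⟩; exact ⟨m, hm, by simp [h]⟩

theorem ball'_iff (p : ℕ → ℕ → Bool) (a n : ℕ) :
    ball' p a n = true ↔ ∀ m < n, p a m = true := by
  unfold ball'
  rw [beq_iff_eq, bc_eq_zero_iff]
  constructor
  · intro H m hm; have := H m hm; simpa using this
  · intro H m hm; simp [H m hm]

theorem bex'_computable {p : ℕ → ℕ → Bool} (hp : Computable₂ p) : Computable₂ (bex' p) := by
  have h1 : Primrec fun n : ℕ => n != 0 :=
    Primrec.not.comp (Primrec.beq.comp .id (.const 0))
  exact (h1.to_comp.comp ((bc_computable hp).comp Computable.fst Computable.snd)).to₂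

theorem ball'_computable {p : ℕ → ℕ → Bool} (hp : Computable₂ p) : Computable₂ (ball' p) := by
  have hnot : Computable₂ fun a m => ! p a m :=
    (Primrec.not.to_comp.comp (hp.comp Computable.fst Computable.snd)).to₂
  have h1 : Primrec fun n : ℕ => n == 0 := Primrec.beq.comp .id (.const 0)
  exact (h1.to_comp.comp ((bc_computable hnot).comp Computable.fst Computable.snd)).to₂

/-! ### The structure `E0`: infinitely many infinite classes -/

def E0 (x y : ℕ) : Prop := x.unpair.1 = y.unpair.1

theorem equivalence_E0 : Equivalence E0 :=
  ⟨fun _ => rfl, fun h => h.symm, fun h1 h2 => h1.trans h2⟩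

/-! ### Computable isomorphism machinery -/

def rrB (d : ℕ → ℕ → Bool) (x : ℕ) : ℕ :=
  bc (fun a y => ball' (fun a2 z => !(d z a2)) a (y+1)) x x

def kB (d : ℕ → ℕ → Bool) (x : ℕ) : ℕ := bc (fun a y => d y a) x x

def minB (d : ℕ → ℕ → Bool) (m : ℕ) : Bool := rrB d m == m

def nB (d : ℕ → ℕ → Bool) (x : ℕ) : ℕ := bc (fun _ m => minB d m) x (rrB d x)

def FB (d : ℕ → ℕ → Bool) (x : ℕ) : ℕ := Nat.pair (nB d x) (kB d x)

theorem rrB_computable {d : ℕ → ℕ → Bool} (hd : Computable₂ d) : Computable (rrB d) := by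
  have hinner : Computable₂ fun a2 z => !(d z a2) :=
    (Primrec.not.to_comp.comp (hd.comp Computable.snd Computable.fst)).to₂
  have hQ : Computable₂ fun a y => ball' (fun a2 z => !(d z a2)) a (y+1) :=
    ((ball'_computable hinner).comp Computable.fst
      (Primrec.succ.to_comp.comp Computable.snd)).to₂
  exact (bc_computable hQ).comp Computable.id Computable.id

theorem kB_computable {d : ℕ → ℕ → Bool} (hd : Computable₂ d) : Computable (kB d) := by
  have : Computable₂ fun a y => d y a := (hd.comp Computable.snd Computable.fst).to₂
  exact (bc_computable this).comp Computable.id Computable.id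

theorem minB_computable {d : ℕ → ℕ → Bool} (hd : Computable₂ d) : Computable (minB d) :=
  Primrec.beq.to_comp.comp (rrB_computable hd) Computable.id

theorem nB_computable {d : ℕ → ℕ → Bool} (hd : Computable₂ d) : Computable (nB d) := by
  have : Computable₂ fun (_ : ℕ) m => minB d m :=
    ((minB_computable hd).comp Computable.snd).to₂
  exact (bc_computable this).comp Computable.id (rrB_computable hd)

theorem FB_computable {d : ℕ → ℕ → Bool} (hd : Computable₂ d) : Computable (FB d) :=
  Primrec₂.natPair.to_comp.comp (nB_computable hd) (kB_computable hd)

section CompCatSec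

variable {E' : ℕ → ℕ → Prop} {d : ℕ → ℕ → Bool}

theorem exE (hE : Equivalence E') (hd : ∀ x y, E' x y ↔ d x y = true) (x : ℕ) :
    ∃ y, d y x = true := ⟨x, (hd x x).1 (hE.refl x)⟩

theorem rrB_eq_find (hE : Equivalence E') (hd : ∀ x y, E' x y ↔ d x y = true) (x : ℕ) :
    rrB d x = Nat.find (exE hE hd x) := by
  set m := Nat.find (exE hE hd x) with hm
  have hdm : d m x = true := Nat.find_spec (exE hE hd x)
  have hmx : m ≤ x := Nat.find_min' (exE hE hd x) ((hd x x).1 (hE.refl x))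
  have hQ : ∀ y, (ball' (fun a2 z => !(d z a2)) x (y+1) = true) ↔ y < m := by
    intro y
    rw [ball'_iff]
    constructor
    · intro H
      by_contra hy
      push_neg at hy
      have := H m (by omega)
      rw [hdm] at this
      simp at this
    · intro hy z hz
      have : d z x ≠ true := Nat.find_min (exE hE hd x) (by omega)
      simp only [Bool.not_eq_true] at this
      simp [this]
  have key : ∀ n, bc (fun a y => ball' (fun a2 z => !(d z a2)) a (y+1)) x n = min m n := by
    intro n
    induction n with
    | zero => simp [bc_zero]
    | succ n ih =>
      rw [bc_succ, ih]
      rcases lt_or_ge n m with h | h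
      · have := (hQ n).2 h
        rw [this]
        simp
        omega
      · have : ball' (fun a2 z => !(d z a2)) x (n+1) = false := by
          rcases Bool.eq_false_or_eq_true (ball' (fun a2 z => !(d z a2)) x (n+1)) with hb | hb
          · exact absurd ((hQ n).1 hb) (by omega)
          · exact hb
        rw [this]
        simp
        omega
  show bc _ x x = m
  rw [key x]
  omega

theorem rrB_spec (hE : Equivalence E') (hd : ∀ x y, E' x y ↔ d x y = true) (x : ℕ) :
    E' (rrB d x) x := by
  rw [rrB_eq_find hE hd]
  exact (hd _ _).2 (Nat.find_spec (exE hE hd x))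

theorem rrB_min' (hE : Equivalence E') (hd : ∀ x y, E' x y ↔ d x y = true) {x y : ℕ}
    (h : E' y x) : rrB d x ≤ y := by
  rw [rrB_eq_find hE hd]
  exact Nat.find_min' (exE hE hd x) ((hd y x).1 h)

theorem rrB_eq_of_rel (hE : Equivalence E') (hd : ∀ x y, E' x y ↔ d x y = true) {x y : ℕ}
    (h : E' x y) : rrB d x = rrB d y := by
  have h1 : E' (rrB d x) y := hE.trans (rrB_spec hE hd x) h
  have h2 : E' (rrB d y) x := hE.trans (rrB_spec hE hd y) (hE.symm h)
  exact le_antisymm (rrB_min' hE hd h2) (rrB_min' hE hd h1)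

theorem rrB_idem (hE : Equivalence E') (hd : ∀ x y, E' x y ↔ d x y = true) (x : ℕ) :
    rrB d (rrB d x) = rrB d x :=
  rrB_eq_of_rel hE hd (rrB_spec hE hd x)

theorem rel_iff_rrB (hE : Equivalence E') (hd : ∀ x y, E' x y ↔ d x y = true) (x y : ℕ) :
    E' x y ↔ rrB d x = rrB d y := by
  constructor
  · exact rrB_eq_of_rel hE hd
  · intro h
    have h1 : E' (rrB d x) x := rrB_spec hE hd x
    have h2 : E' (rrB d y) y := rrB_spec hE hd y
    rw [h] at h1
    exact hE.trans (hE.symm h1) h2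

theorem count_congr' {p q : ℕ → Prop} [DecidablePred p] [DecidablePred q]
    (h : ∀ i, p i ↔ q i) (n : ℕ) : Nat.count p n = Nat.count q n := by
  induction n with
  | zero => simp
  | succ n ih =>
    rw [Nat.count_succ, Nat.count_succ, ih]
    by_cases hp : p n
    · rw [if_pos hp, if_pos ((h n).1 hp)]
    · rw [if_neg hp, if_neg (fun hq => hp ((h n).2 hq))]

theorem kB_eq (x : ℕ) : kB d x = Nat.count (fun y => d y x = true) x :=
  bc_eq_count _ x x

theorem nB_eq (x : ℕ) : nB d x = Nat.count (fun m => minB d m = true) (rrB d x) :=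
  bc_eq_count _ x (rrB d x)

theorem minB_iff (m : ℕ) : minB d m = true ↔ rrB d m = m := by
  simp [minB]

theorem FB_iso (hE : Equivalence E') (hd : ∀ x y, E' x y ↔ d x y = true)
    (hcls : ∀ x, {y | E' y x}.Infinite)
    (hmin : {m | minB d m = true}.Infinite) : IsIso E' E0 (FB d) := by
  have hdx : ∀ x, d x x = true := fun x => (hd x x).1 (hE.refl x)
  -- the relation is preserved
  have hrel : ∀ x y, E' x y ↔ nB d x = nB d y := by
    intro x y
    constructor
    · intro h
      have := rrB_eq_of_rel hE hd h
      rw [nB_eq, nB_eq, this]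
    · intro h
      rw [rel_iff_rrB hE hd]
      have hx : minB d (rrB d x) = true := (minB_iff _).2 (rrB_idem hE hd x)
      have hy : minB d (rrB d y) = true := (minB_iff _).2 (rrB_idem hE hd y)
      have ex := Nat.nth_count (p := fun m => minB d m = true) hx
      have ey := Nat.nth_count (p := fun m => minB d m = true) hy
      rw [← nB_eq] at ex ey
      rw [← ex, ← ey, h]
  -- pred equality for related elements
  have hpred : ∀ x y, E' x y →
      (fun z => d z x = true) = (fun z => d z y = true) := by
    intro x y h
    funext z
    exact propext (by rw [← hd, ← hd]; exact ⟨fun h' => hE.trans h' h, fun h' => hE.trans h' (hE.symm h)⟩)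
  have hself : ∀ x, x = Nat.nth (fun z => d z x = true) (kB d x) := by
    intro x
    rw [kB_eq]
    exact (Nat.nth_count (p := fun z => d z x = true) (hdx x)).symm
  constructor
  constructor
  · -- injective
    intro x y hxy
    have := Nat.pair_eq_pair.1 hxy
    obtain ⟨hn, hk⟩ := this
    have hExy : E' x y := (hrel x y).2 hn
    have hp := hpred x y hExy
    have h1 := hself x
    have h2 := hself y
    have hcnt : kB d x = kB d y := hk
    rw [h1, h2, hp, hcnt]
  · -- surjective
    intro z
    set a := z.unpair.1 with ha
    set b := z.unpair.2 with hb
    set m := Nat.nth (fun m => minB d m = true) a with hm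
    have hmMin : minB d m = true := Nat.nth_mem_of_infinite hmin a
    have hrm : rrB d m = m := (minB_iff m).1 hmMin
    have hqinf : {y | d y m = true}.Infinite := by
      have : {y | E' y m} = {y | d y m = true} := by
        ext y; exact hd y m
      rw [← this]
      exact hcls m
    set x := Nat.nth (fun y => d y m = true) b with hx
    have hqx : d x m = true := Nat.nth_mem_of_infinite hqinf b
    have hExm : E' x m := (hd x m).2 hqx
    have hrx : rrB d x = m := (rrB_eq_of_rel hE hd hExm).trans hrm
    refine ⟨x, ?_⟩
    have hkx : kB d x = b := by
      have hcc : Nat.count (fun y => d y x = true) x = Nat.count (fun y => d y m = true) x := by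
        refine count_congr' (fun i => ?_) x
        rw [← hd, ← hd]
        exact ⟨fun h' => hE.trans h' hExm, fun h' => hE.trans h' (hE.symm hExm)⟩
      rw [kB_eq, hcc, hx]
      exact Nat.count_nth_of_infinite hqinf b
    have hnx : nB d x = a := by
      rw [nB_eq, hrx]
      exact Nat.count_nth_of_infinite hmin a
    rw [FB, hkx, hnx, ha, hb, Nat.pair_unpair]
  · -- relation
    intro x y
    rw [hrel x y]
    show nB d x = nB d y ↔ E0 (FB d x) (FB d y)
    unfold E0 FB
    rw [Nat.unpair_pair, Nat.unpair_pair]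
end CompCatSec

theorem compRel_E0 : CompDecRel E0 := by
  refine ⟨fun x y => x.unpair.1 == y.unpair.1, ?_, ?_⟩
  · exact (Primrec.beq.comp (Primrec.fst.comp (Primrec.unpair.comp Primrec.fst))
      (Primrec.fst.comp (Primrec.unpair.comp Primrec.snd))).to_comp.to₂
  · intro x y
    unfold E0
    rw [beq_iff_eq]

theorem compCat_E0 : CompCat E0 := by
  intro E' hEq hCR hIso
  obtain ⟨d, hdc, hd⟩ := hCR
  obtain ⟨g, hg⟩ := hIso
  have hd' : ∀ x y, E' x y ↔ d x y = true := fun x y => hd x y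
  refine ⟨FB d, FB_computable hdc, FB_iso hEq hd' ?_ ?_⟩
  · -- every class is infinite
    intro x
    have hset : {y | E' y x} = g ⁻¹' {z | E0 z (g x)} := by
      ext y
      exact hg.2 y x
    rw [hset]
    refine Set.Infinite.preimage ?_ (fun z _ => hg.1.2 z)
    refine Set.infinite_of_injective_forall_mem
      (f := fun k : ℕ => Nat.pair (g x).unpair.1 k) ?_ ?_
    · intro i j hij
      exact (Nat.pair_eq_pair.1 hij).2
    · intro k
      show E0 _ _
      unfold E0
      rw [Nat.unpair_pair]
  · -- infinitely many classes
    have hsurj := hg.1.2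
    refine Set.infinite_of_injective_forall_mem
      (f := fun i : ℕ => rrB d (Function.surjInv hsurj (Nat.pair i 0))) ?_ ?_
    · intro i j hij
      have h1 : E' (Function.surjInv hsurj (Nat.pair i 0)) (Function.surjInv hsurj (Nat.pair j 0)) := by
        rw [rel_iff_rrB hEq hd']
        exact hij
      have h2 : E0 (Nat.pair i 0) (Nat.pair j 0) := by
        have := (hg.2 _ _).1 h1
        rwa [Function.surjInv_eq hsurj, Function.surjInv_eq hsurj] at this
      unfold E0 at h2
      rw [Nat.unpair_pair, Nat.unpair_pair] at h2
      exact h2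
    · intro i
      show minB d _ = true
      rw [minB_iff]
      exact rrB_idem hEq hd' _

/-! ### A simple set via Post's construction -/

open Nat.Partrec (Code)
open Nat.Partrec.Code

def candB (e s x : ℕ) : Bool :=
  (decide (e + e < x) && decide (x ≤ s)) && (evaln s (Denumerable.ofNat Code e) x).isSome

def hasCB (e s : ℕ) : Bool :=
  bex' (fun a x => candB a.unpair.1 a.unpair.2 x) (Nat.pair e s) (s+1)

def witB (e s n : ℕ) : Bool :=
  ((hasCB e s && ball' (fun e' t => !hasCB e' t) e s) && candB e s n) &&
    ball' (fun a y => !candB a.unpair.1 a.unpair.2 y) (Nat.pair e s) n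

def inKB (s n : ℕ) : Bool :=
  bex' (fun a e => bex' (fun b t => witB b.unpair.1 t b.unpair.2)
    (Nat.pair e a.unpair.2) (a.unpair.1 + 1)) (Nat.pair s n) s

def KK (n : ℕ) : Prop := ∃ s, inKB s n = true

theorem candB_iff {e s x : ℕ} : candB e s x = true ↔
    e + e < x ∧ x ≤ s ∧ (evaln s (Denumerable.ofNat Code e) x).isSome = true := by
  simp [candB, and_assoc]

theorem hasCB_iff {e s : ℕ} : hasCB e s = true ↔ ∃ x ≤ s, candB e s x = true := by
  unfold hasCB
  rw [bex'_iff]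
  constructor
  · rintro ⟨x, hx, h⟩
    rw [Nat.unpair_pair] at h
    exact ⟨x, by omega, h⟩
  · rintro ⟨x, hx, h⟩
    exact ⟨x, by omega, by rw [Nat.unpair_pair]; exact h⟩

theorem witB_iff {e s n : ℕ} : witB e s n = true ↔
    hasCB e s = true ∧ (∀ t < s, hasCB e t = false) ∧ candB e s n = true ∧
      ∀ y < n, candB e s y = false := by
  unfold witB
  simp only [Bool.and_eq_true, ball'_iff, Bool.not_eq_true', Nat.unpair_pair, and_assoc]

theorem inKB_iff {s n : ℕ} : inKB s n = true ↔ ∃ e < s, ∃ t ≤ s, witB e t n = true := by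
  unfold inKB
  simp only [bex'_iff, Nat.unpair_pair, Nat.lt_succ_iff]

theorem inKB_mono {s s' n : ℕ} (h : s ≤ s') (hk : inKB s n = true) : inKB s' n = true := by
  rw [inKB_iff] at hk ⊢
  obtain ⟨e, he, t, ht, hw⟩ := hk
  exact ⟨e, by omega, t, by omega, hw⟩

theorem not_KK_inKB {n : ℕ} (h : ¬ KK n) (s : ℕ) : inKB s n = false := by
  rcases Bool.eq_false_or_eq_true (inKB s n) with hb | hb
  · exact absurd ⟨s, hb⟩ h
  · exact hb

theorem KK_of_wit {e t n : ℕ} (hw : witB e t n = true) : KK n := by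
  refine ⟨e + t + 1, ?_⟩
  rw [inKB_iff]
  exact ⟨e, by omega, t, by omega, hw⟩

theorem wit_unique {e s s' n n' : ℕ} (h1 : witB e s n = true) (h2 : witB e s' n' = true) :
    s = s' ∧ n = n' := by
  rw [witB_iff] at h1 h2
  obtain ⟨ha, hmin, hc, hcmin⟩ := h1
  obtain ⟨ha', hmin', hc', hcmin'⟩ := h2
  have hss : s = s' := by
    rcases lt_trichotomy s s' with h | h | h
    · rw [hmin' s h] at ha; cases ha
    · exact h
    · rw [hmin s' h] at ha'; cases ha'
  subst hss
  rcases lt_trichotomy n n' with h | h | h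
  · rw [hcmin' n h] at hc; cases hc
  · exact ⟨rfl, h⟩
  · rw [hcmin n' h] at hc'; cases hc'

theorem wit_gt {e s n : ℕ} (hw : witB e s n = true) : e + e < n :=
  ((candB_iff).1 (witB_iff.1 hw).2.2.1).1

theorem KK_coinfinite : {n | ¬ KK n}.Infinite := by
  classical
  apply Set.infinite_of_forall_exists_gt
  intro m
  set S : Finset ℕ := Finset.Iic (2*m+2) with hS
  set A : Finset ℕ := S.filter (fun n => KK n) with hA
  set B : Finset ℕ := S.filter (fun n => ¬ KK n) with hB
  have hcards : A.card + B.card = S.card := Finset.card_filter_add_card_filter_not _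
  have hScard : S.card = 2*m+3 := by rw [hS, Nat.card_Iic]
  have hAcard : A.card ≤ m + 1 := by
    have : A.card ≤ (Finset.Iic m).card := by
      apply Finset.card_le_card_of_injOn
        (fun n => if h : ∃ e t, witB e t n = true then h.choose else 0)
      · intro n hn
        rw [hA, Finset.mem_coe, Finset.mem_filter] at hn
        obtain ⟨hnS, hKn⟩ := hn
        obtain ⟨s, hs⟩ := hKn
        rw [inKB_iff] at hs
        obtain ⟨e, _, t, _, hw⟩ := hs
        have hex : ∃ e t, witB e t n = true := ⟨e, t, hw⟩
        beta_reduce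
        rw [dif_pos hex]
        obtain ⟨t', hw'⟩ := hex.choose_spec
        have := wit_gt hw'
        rw [hS, Finset.mem_Iic] at hnS
        rw [Finset.mem_coe, Finset.mem_Iic]
        omega
      · intro n1 hn1 n2 hn2 heq
        rw [Finset.mem_coe, hA, Finset.mem_filter] at hn1 hn2
        obtain ⟨s1, hs1⟩ := hn1.2
        rw [inKB_iff] at hs1
        obtain ⟨e1, _, t1, _, hw1⟩ := hs1
        obtain ⟨s2, hs2⟩ := hn2.2
        rw [inKB_iff] at hs2
        obtain ⟨e2, _, t2, _, hw2⟩ := hs2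
        have hex1 : ∃ e t, witB e t n1 = true := ⟨e1, t1, hw1⟩
        have hex2 : ∃ e t, witB e t n2 = true := ⟨e2, t2, hw2⟩
        beta_reduce at heq
        rw [dif_pos hex1, dif_pos hex2] at heq
        obtain ⟨u1, hu1⟩ := hex1.choose_spec
        obtain ⟨u2, hu2⟩ := hex2.choose_spec
        rw [heq] at hu1
        exact (wit_unique hu1 hu2).2
    simpa [Nat.card_Iic] using this
  have hBcard : m + 2 ≤ B.card := by omega
  have : ¬ (B ⊆ Finset.Iic m) := by
    intro hsub
    have := Finset.card_le_card hsub
    rw [Nat.card_Iic] at this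
    omega
  obtain ⟨n, hnB, hnm⟩ := Finset.not_subset.1 this
  rw [hB, Finset.mem_filter] at hnB
  rw [Finset.mem_Iic] at hnm
  exact ⟨n, hnB.2, by omega⟩

theorem KK_immune {h : ℕ → ℕ} (hc : Computable h) (hinj : Function.Injective h)
    (hK : ∀ i, ¬ KK (h i)) : False := by
  -- the range of `h` is the domain of a partial computable function
  have hdec : Computable₂ fun (x n : ℕ) => decide (h n = x) :=
    (Primrec.eq.decide.to_comp.comp (hc.comp Computable.snd) Computable.fst).to₂
  have hpr : Partrec fun x : ℕ => Nat.rfind (fun n => Part.some (decide (h n = x))) :=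
    Partrec.rfind hdec.partrec₂
  obtain ⟨c, hcode⟩ := Code.exists_code.1 (Partrec.nat_iff.1 hpr)
  set e := Encodable.encode c with he
  have hofNat : Denumerable.ofNat Code e = c := Denumerable.ofNat_encode c
  have hdom : ∀ x : ℕ, (eval c x).Dom ↔ ∃ n, h n = x := by
    intro x
    rw [hcode]
    constructor
    · intro hd
      obtain ⟨n, hn, _⟩ := Nat.rfind_dom.1 hd
      simp only [Part.mem_some_iff] at hn
      exact ⟨n, of_decide_eq_true hn.symm⟩
    · rintro ⟨n, hn⟩
      apply Nat.rfind_dom.2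
      refine ⟨n, ?_, fun {m} _ => trivial⟩
      simp [hn]
  -- find an element of the range above 2e
  have hran : (Set.range h).Infinite := Set.infinite_range_of_injective hinj
  obtain ⟨x₀, hx₀mem, hx₀gt⟩ := hran.exists_gt (e + e)
  have hx₀dom : (eval c x₀).Dom := (hdom x₀).2 (by obtain ⟨i, hi⟩ := hx₀mem; exact ⟨i, hi⟩)
  obtain ⟨k, hk⟩ := evaln_complete.1 (Part.get_mem hx₀dom)
  -- so there is a candidate for e at some stage
  have hcand : candB e (max k x₀) x₀ = true := by
    rw [candB_iff]
    refine ⟨hx₀gt, le_max_right _ _, ?_⟩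
    rw [hofNat]
    have := evaln_mono (le_max_left k x₀) hk
    rw [Option.isSome_iff_exists]
    exact ⟨_, this⟩
  have hhasC : ∃ s, hasCB e s = true :=
    ⟨max k x₀, hasCB_iff.2 ⟨x₀, le_max_right _ _, hcand⟩⟩
  set s₀ := Nat.find hhasC with hs₀
  have hs₀spec : hasCB e s₀ = true := Nat.find_spec hhasC
  have hcand₀ : ∃ x, candB e s₀ x = true := by
    obtain ⟨x, _, hx⟩ := hasCB_iff.1 hs₀spec
    exact ⟨x, hx⟩
  set n₀ := Nat.find hcand₀ with hn₀
  have hwit : witB e s₀ n₀ = true := by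
    rw [witB_iff]
    refine ⟨hs₀spec, ?_, Nat.find_spec hcand₀, ?_⟩
    · intro t ht
      have := Nat.find_min hhasC ht
      rcases Bool.eq_false_or_eq_true (hasCB e t) with hb | hb
      · exact absurd hb this
      · exact hb
    · intro y hy
      have := Nat.find_min hcand₀ hy
      rcases Bool.eq_false_or_eq_true (candB e s₀ y) with hb | hb
      · exact absurd hb this
      · exact hb
  -- the witness is in K but also in the range of h
  have hKKn₀ : KK n₀ := KK_of_wit hwit
  have hn₀ran : ∃ i, h i = n₀ := by
    have hcn := (witB_iff.1 hwit).2.2.1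
    rw [candB_iff, hofNat] at hcn
    obtain ⟨_, _, hsome⟩ := hcn
    rw [Option.isSome_iff_exists] at hsome
    obtain ⟨y, hy⟩ := hsome
    have : y ∈ eval c n₀ := evaln_sound hy
    exact (hdom n₀).1 (Part.dom_iff_mem.2 ⟨y, this⟩)
  obtain ⟨i, hi⟩ := hn₀ran
  exact hK i (hi ▸ hKKn₀)

/-! ### Computability of `inKB` -/

theorem candB_pred_primrec : Primrec₂ fun (a x : ℕ) => candB a.unpair.1 a.unpair.2 x := by
  apply Primrec₂.mk
  have pe : Primrec fun p : ℕ × ℕ => p.1.unpair.1 :=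
    Primrec.fst.comp (Primrec.unpair.comp Primrec.fst)
  have ps : Primrec fun p : ℕ × ℕ => p.1.unpair.2 :=
    Primrec.snd.comp (Primrec.unpair.comp Primrec.fst)
  have px : Primrec fun p : ℕ × ℕ => p.2 := Primrec.snd
  have h1 : Primrec fun p : ℕ × ℕ => decide (p.1.unpair.1 + p.1.unpair.1 < p.2) :=
    (Primrec.nat_lt.comp (Primrec.nat_add.comp pe pe) px).decide
  have h2 : Primrec fun p : ℕ × ℕ => decide (p.2 ≤ p.1.unpair.2) :=
    (Primrec.nat_le.comp px ps).decide
  have h3 : Primrec fun p : ℕ × ℕ =>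
      (evaln p.1.unpair.2 (Denumerable.ofNat Code p.1.unpair.1) p.2).isSome :=
    Primrec.option_isSome.comp
      (primrec_evaln.comp ((ps.pair ((Primrec.ofNat Code).comp pe)).pair px))
  have h12 : Primrec fun p : ℕ × ℕ =>
      (decide (p.1.unpair.1 + p.1.unpair.1 < p.2) && decide (p.2 ≤ p.1.unpair.2)) :=
    (Primrec.dom_bool₂ (· && ·)).comp h1 h2
  exact ((Primrec.dom_bool₂ (· && ·)).comp h12 h3).of_eq fun p => by
    simp [candB]

theorem hasCB_computable : Computable₂ hasCB := by
  have h1 : Computable₂ fun (a x : ℕ) => candB a.unpair.1 a.unpair.2 x :=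
    candB_pred_primrec.to_comp
  have h2 := bex'_computable h1
  have hpair : Computable fun p : ℕ × ℕ => Nat.pair p.1 p.2 := Primrec₂.natPair.to_comp
  have hsucc : Computable fun p : ℕ × ℕ => p.2 + 1 :=
    (Primrec.succ.comp Primrec.snd).to_comp
  exact (h2.comp hpair hsucc).to₂

set_option maxHeartbeats 1000000 in
theorem witB_pred_computable : Computable₂ fun (b t : ℕ) => witB b.unpair.1 t b.unpair.2 := by
  have pe : Computable fun q : ℕ × ℕ => q.1.unpair.1 :=
    (Primrec.fst.comp (Primrec.unpair.comp Primrec.fst)).to_comp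
  have pn : Computable fun q : ℕ × ℕ => q.1.unpair.2 :=
    (Primrec.snd.comp (Primrec.unpair.comp Primrec.fst)).to_comp
  have ps : Computable fun q : ℕ × ℕ => q.2 := Computable.snd
  have hA1 : Computable fun q : ℕ × ℕ => hasCB q.1.unpair.1 q.2 :=
    hasCB_computable.comp pe ps
  have hnot : Computable₂ fun e' t' => !hasCB e' t' :=
    (Primrec.not.to_comp.comp (hasCB_computable.comp Computable.fst Computable.snd)).to₂
  have hA2 : Computable fun q : ℕ × ℕ => ball' (fun e' t' => !hasCB e' t') q.1.unpair.1 q.2 :=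
    (ball'_computable hnot).comp pe ps
  have hA3 : Computable fun q : ℕ × ℕ => candB q.1.unpair.1 q.2 q.1.unpair.2 := by
    have := candB_pred_primrec.to_comp.comp
      ((Primrec₂.natPair.comp (Primrec.fst.comp (Primrec.unpair.comp Primrec.fst))
        Primrec.snd).to_comp) pn
    exact this.of_eq fun q => by simp [Nat.unpair_pair]
  have hA4 : Computable fun q : ℕ × ℕ =>
      ball' (fun a y => !candB a.unpair.1 a.unpair.2 y) (Nat.pair q.1.unpair.1 q.2)
        q.1.unpair.2 := by
    have hnotc : Computable₂ fun (a y : ℕ) => !candB a.unpair.1 a.unpair.2 y :=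
      (Primrec.not.to_comp.comp
        (candB_pred_primrec.to_comp.comp Computable.fst Computable.snd)).to₂
    exact (ball'_computable hnotc).comp
      ((Primrec₂.natPair.comp (Primrec.fst.comp (Primrec.unpair.comp Primrec.fst))
        Primrec.snd).to_comp) pn
  have hb2 : Computable fun q : ℕ × ℕ =>
      (hasCB q.1.unpair.1 q.2 && ball' (fun e' t' => !hasCB e' t') q.1.unpair.1 q.2) :=
    (Primrec.dom_bool₂ (· && ·)).to_comp.comp hA1 hA2
  have hb3 : Computable fun q : ℕ × ℕ =>
      ((hasCB q.1.unpair.1 q.2 && ball' (fun e' t' => !hasCB e' t') q.1.unpair.1 q.2) &&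
        candB q.1.unpair.1 q.2 q.1.unpair.2) :=
    (Primrec.dom_bool₂ (· && ·)).to_comp.comp hb2 hA3
  have hb4 : Computable fun q : ℕ × ℕ =>
      (((hasCB q.1.unpair.1 q.2 && ball' (fun e' t' => !hasCB e' t') q.1.unpair.1 q.2) &&
        candB q.1.unpair.1 q.2 q.1.unpair.2) &&
        ball' (fun a y => !candB a.unpair.1 a.unpair.2 y) (Nat.pair q.1.unpair.1 q.2)
          q.1.unpair.2) :=
    (Primrec.dom_bool₂ (· && ·)).to_comp.comp hb3 hA4
  exact hb4.to₂

set_option maxHeartbeats 1000000 in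
theorem inKB_computable : Computable₂ inKB := by
  have hg : Computable fun q : ℕ × ℕ => Nat.pair q.2 q.1.unpair.2 :=
    (Primrec₂.natPair.comp Primrec.snd
      (Primrec.snd.comp (Primrec.unpair.comp Primrec.fst))).to_comp
  have hh : Computable fun q : ℕ × ℕ => q.1.unpair.1 + 1 :=
    (Primrec.succ.comp (Primrec.fst.comp (Primrec.unpair.comp Primrec.fst))).to_comp
  have hmid : Computable fun q : ℕ × ℕ =>
      bex' (fun (b t : ℕ) => witB b.unpair.1 t b.unpair.2)
        (Nat.pair q.2 q.1.unpair.2) (q.1.unpair.1 + 1) :=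
    (bex'_computable witB_pred_computable).comp hg hh
  have hmid₂ : Computable₂ fun (a e : ℕ) =>
      bex' (fun (b t : ℕ) => witB b.unpair.1 t b.unpair.2)
        (Nat.pair e a.unpair.2) (a.unpair.1 + 1) := hmid.to₂
  have hfin : Computable fun p : ℕ × ℕ =>
      bex' (fun (a e : ℕ) =>
        bex' (fun (b t : ℕ) => witB b.unpair.1 t b.unpair.2)
          (Nat.pair e a.unpair.2) (a.unpair.1 + 1)) (Nat.pair p.1 p.2) p.1 :=
    (bex'_computable hmid₂).comp Primrec₂.natPair.to_comp Computable.fst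
  have : Computable fun p : ℕ × ℕ => inKB p.1 p.2 := hfin.of_eq fun p => rfl
  exact this

/-! ### The structure `E1` -/

def E1 (x y : ℕ) : Prop :=
  x = y ∨ (x.unpair.1 = y.unpair.1 ∧ inKB (max x.unpair.2 y.unpair.2) x.unpair.1 = false)

instance E1.dec : ∀ x y, Decidable (E1 x y) := fun x y => by unfold E1; infer_instance

theorem equivalence_E1 : Equivalence E1 := by
  constructor
  · intro x; exact Or.inl rfl
  · intro x y h
    rcases h with rfl | ⟨h1, h2⟩
    · exact Or.inl rfl
    · refine Or.inr ⟨h1.symm, ?_⟩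
      rw [max_comm, ← h1]
      exact h2
  · intro x y z hxy hyz
    rcases hxy with rfl | ⟨h1, h2⟩
    · exact hyz
    · rcases hyz with rfl | ⟨h3, h4⟩
      · exact Or.inr ⟨h1, h2⟩
      · refine Or.inr ⟨h1.trans h3, ?_⟩
        rcases Bool.eq_false_or_eq_true (inKB (max x.unpair.2 z.unpair.2) x.unpair.1) with hb | hb
        · exfalso
          rcases le_total x.unpair.2 z.unpair.2 with hle | hle
          · have : max x.unpair.2 z.unpair.2 ≤ max y.unpair.2 z.unpair.2 := by omega
            have := inKB_mono this hb
            rw [h1] at this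
            rw [this] at h4
            cases h4
          · have : max x.unpair.2 z.unpair.2 ≤ max x.unpair.2 y.unpair.2 := by omega
            have := inKB_mono this hb
            rw [this] at h2
            cases h2
        · exact hb

theorem compRel_E1 : CompDecRel E1 := by
  refine ⟨fun x y => (x == y) ||
    ((x.unpair.1 == y.unpair.1) && !(inKB (max x.unpair.2 y.unpair.2) x.unpair.1)), ?_, ?_⟩
  · have h1 : Computable fun p : ℕ × ℕ => p.1 == p.2 :=
      Primrec.beq.to_comp.comp Computable.fst Computable.snd
    have hfst1 : Computable fun p : ℕ × ℕ => p.1.unpair.1 :=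
      (Primrec.fst.comp (Primrec.unpair.comp Primrec.fst)).to_comp
    have h2 : Computable fun p : ℕ × ℕ => p.1.unpair.1 == p.2.unpair.1 :=
      Primrec.beq.to_comp.comp hfst1
        ((Primrec.fst.comp (Primrec.unpair.comp Primrec.snd)).to_comp)
    have hmax : Computable fun p : ℕ × ℕ => max p.1.unpair.2 p.2.unpair.2 :=
      Primrec.nat_max.to_comp.comp
        ((Primrec.snd.comp (Primrec.unpair.comp Primrec.fst)).to_comp)
        ((Primrec.snd.comp (Primrec.unpair.comp Primrec.snd)).to_comp)
    have h3 : Computable fun p : ℕ × ℕ =>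
        !(inKB (max p.1.unpair.2 p.2.unpair.2) p.1.unpair.1) :=
      Primrec.not.to_comp.comp (inKB_computable.comp hmax hfst1)
    have h23 : Computable fun p : ℕ × ℕ =>
        ((p.1.unpair.1 == p.2.unpair.1) &&
          !(inKB (max p.1.unpair.2 p.2.unpair.2) p.1.unpair.1)) :=
      (Primrec.dom_bool₂ (· && ·)).to_comp.comp h2 h3
    exact ((Primrec.dom_bool₂ (· || ·)).to_comp.comp h1 h23).to₂
  · intro x y
    unfold E1
    simp [Bool.or_eq_true, Bool.and_eq_true, Bool.not_eq_true']

theorem biemb_E0_E1 : BiEmb E0 E1 := by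
  constructor
  · -- E0 embeds into E1
    set N : ℕ → ℕ := Nat.nth (fun n => ¬ KK n) with hN
    have hNmem : ∀ i, ¬ KK (N i) := fun i => Nat.nth_mem_of_infinite KK_coinfinite i
    have hNinj : Function.Injective N := Nat.nth_injective KK_coinfinite
    refine ⟨fun x => Nat.pair (N x.unpair.1) x.unpair.2, ?_, ?_⟩
    · intro x y hxy
      obtain ⟨h1, h2⟩ := Nat.pair_eq_pair.1 hxy
      have := hNinj h1
      have hx := Nat.pair_unpair x
      have hy := Nat.pair_unpair y
      rw [← hx, ← hy, this, h2]
    · intro x y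
      constructor
      · intro h
        refine Or.inr ⟨?_, ?_⟩
        · rw [Nat.unpair_pair, Nat.unpair_pair]
          exact congrArg N h
        · rw [Nat.unpair_pair]
          exact not_KK_inKB (hNmem x.unpair.1) _
      · intro h
        rcases h with heq | ⟨h1, _⟩
        · obtain ⟨h1, h2⟩ := Nat.pair_eq_pair.1 heq
          exact hNinj h1
        · rw [Nat.unpair_pair, Nat.unpair_pair] at h1
          exact hNinj h1
  · -- E1 embeds into E0
    have hex : ∀ x, ∃ y, E1 y x := fun x => ⟨x, Or.inl rfl⟩
    set c : ℕ → ℕ := fun x => Nat.find (hex x) with hc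
    have hcspec : ∀ x, E1 (c x) x := fun x => Nat.find_spec (hex x)
    have hcmin : ∀ x y, E1 y x → c x ≤ y := fun x y h => Nat.find_min' (hex x) h
    have hceq : ∀ x y, E1 x y → c x = c y := by
      intro x y h
      have h1 : E1 (c x) y := equivalence_E1.trans (hcspec x) h
      have h2 : E1 (c y) x := equivalence_E1.trans (hcspec y) (equivalence_E1.symm h)
      exact le_antisymm (hcmin x _ h2) (hcmin y _ h1)
    refine ⟨fun x => Nat.pair (c x) x, ?_, ?_⟩
    · intro x y hxy
      exact (Nat.pair_eq_pair.1 hxy).2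
    · intro x y
      constructor
      · intro h
        show (Nat.pair (c x) x).unpair.1 = (Nat.pair (c y) y).unpair.1
        rw [Nat.unpair_pair, Nat.unpair_pair]
        exact hceq x y h
      · intro h
        have h' : c x = c y := by
          have := h
          unfold E0 at this
          rwa [Nat.unpair_pair, Nat.unpair_pair] at this
        have h1 : E1 x (c x) := equivalence_E1.symm (hcspec x)
        rw [h'] at h1
        exact equivalence_E1.trans h1 (hcspec y)

theorem noCompEmb : ¬ ∃ f, Computable f ∧ IsEmb E0 E1 f := by
  rintro ⟨f, hfc, hinj, hiff⟩
  set h : ℕ → ℕ := fun i => (f (Nat.pair i 0)).unpair.1 with hh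
  have hcomp : Computable h := by
    have hpi : Computable fun i : ℕ => Nat.pair i 0 :=
      (Primrec₂.natPair.comp Primrec.id (Primrec.const 0)).to_comp
    exact (Primrec.fst.comp Primrec.unpair).to_comp.comp (hfc.comp hpi)
  have hK : ∀ i, ¬ KK (h i) := by
    intro i hKn
    obtain ⟨s, hs⟩ := hKn
    set a := f (Nat.pair i 0) with ha
    have hTinf : {y | E1 y a}.Infinite := by
      refine Set.infinite_of_injective_forall_mem (f := fun k => f (Nat.pair i k)) ?_ ?_
      · intro k1 k2 hk
        have := hinj hk
        exact (Nat.pair_eq_pair.1 this).2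
      · intro k
        refine (hiff (Nat.pair i k) (Nat.pair i 0)).1 ?_
        show (Nat.pair i k).unpair.1 = (Nat.pair i 0).unpair.1
        rw [Nat.unpair_pair, Nat.unpair_pair]
    have hTfin : {y | E1 y a}.Finite := by
      have hsub : {y | E1 y a} ⊆ insert a ((fun j => Nat.pair (h i) j) '' (Set.Iio s)) := by
        intro y hy
        rcases hy with rfl | ⟨h1, h2⟩
        · exact Set.mem_insert _ _
        · right
          refine ⟨y.unpair.2, ?_, ?_⟩
          · by_contra hge
            rw [Set.mem_Iio] at hge
            push_neg at hge
            have hle : s ≤ max y.unpair.2 a.unpair.2 :=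
              le_trans hge (le_max_left _ _)
            have htr : inKB (max y.unpair.2 a.unpair.2) y.unpair.1 = true := by
              rw [h1]
              exact inKB_mono hle hs
            rw [htr] at h2
            cases h2
          · show Nat.pair (h i) y.unpair.2 = y
            have hhy : h i = y.unpair.1 := h1.symm
            rw [hhy]
            exact Nat.pair_unpair y
      exact Set.Finite.subset (Set.Finite.insert a ((Set.finite_Iio s).image _)) hsub
    exact hTinf hTfin
  have hinj' : Function.Injective h := by
    intro i j hij
    have hE1 : E1 (f (Nat.pair i 0)) (f (Nat.pair j 0)) := by
      refine Or.inr ⟨hij, ?_⟩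
      exact not_KK_inKB (hK i) _
    have := (hiff (Nat.pair i 0) (Nat.pair j 0)).2 hE1
    unfold E0 at this
    rwa [Nat.unpair_pair, Nat.unpair_pair] at this
  exact KK_immune hcomp hinj' hK

/-- There is a computable equivalence structure that is computably categorical
but not computably bi-embeddably categorical. -/
theorem stmt2 : ∃ E : ℕ → ℕ → Prop,
    Equivalence E ∧ CompDecRel E ∧ CompCat E ∧ ¬ CompBiembCat E := by
  refine ⟨E0, equivalence_E0, compRel_E0, compCat_E0, ?_⟩
  intro H
  obtain ⟨⟨f, hf, hemb⟩, -⟩ := H E1 equivalence_E1 compRel_E1 biemb_E0_E1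
  exact noCompEmb ⟨f, hf, hemb⟩
end

section
/- Let A be a computable equivalence structure on ℕ whose classes are exactly one class of each finite positive size (for instance, under the standard pairing, ⟨i,n⟩ with n ≤ i are declared equivalent exactly when they share the same first coordinate i). Then there exists a computable equivalence structure B on ℕ, all of whose equivalence classes are finite and which has finite classes of arbitrarily large size (so B is bi-embeddable with A), such that no embedding of B into A is computable. -/
open Nat.Partrec (Code)
open Nat.Partrec.Code

namespace Stmt10Aux

/-- bounded "forall" as a Bool. -/
def bAll : ℕ → (ℕ → Bool) → Bool
  | 0, _ => true
  | n+1, p => bAll n p && p n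

theorem bAll_iff (n : ℕ) (p : ℕ → Bool) : bAll n p = true ↔ ∀ i < n, p i = true := by
  induction n with
  | zero => simp [bAll]
  | succ n ih =>
    simp only [bAll, Bool.and_eq_true, ih]
    constructor
    · rintro ⟨h1, h2⟩ i hi
      rcases Nat.lt_succ_iff_lt_or_eq.1 hi with h | rfl
      · exact h1 i h
      · exact h2
    · intro h; exact ⟨fun i hi => h i (hi.trans (Nat.lt_succ_self n)), h n (Nat.lt_succ_self n)⟩

/-- list lookup with default false -/
def look (h : List Bool) (n : ℕ) : Bool := (h[n]?).getD false

/-- the candidate image of the `t'`-th potential element of the `e`-th row,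
computed with `t` steps; `t+1` (an out-of-bound value) if not converged. -/
def img (e t t' : ℕ) : ℕ :=
  (evaln t (Denumerable.ofNat Code (e / 2)) (Nat.pair e t')).getD (t + 1)

/-- one step of the construction: decide whether element `⟨e,t⟩` joins the
`e`-th class, given the history `h` of previous decisions. -/
def step (fA : ℕ → ℕ → Bool) (e t : ℕ) (h : List Bool) : Bool :=
  if e % 2 = 1 then decide (t ≤ e / 2)
  else if t = 0 then true
  else
    bAll t fun t1 =>
      !(look h t1) ||
        (decide (img e t t1 ≤ t) &&
          bAll t fun t2 =>
            !(look h t2) ||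
              ((decide (t1 = t2) || !(decide (img e t t1 = img e t t2))) &&
                fA (img e t t1) (img e t t2)))

/-- history of the construction on row `e` -/
def hist (fA : ℕ → ℕ → Bool) (e : ℕ) : ℕ → List Bool
  | 0 => []
  | t+1 => hist fA e t ++ [step fA e t (hist fA e t)]

/-- `P fA e t = true` iff element `⟨e,t⟩` belongs to the big class of row `e`. -/
def P (fA : ℕ → ℕ → Bool) (e t : ℕ) : Bool := step fA e t (hist fA e t)

theorem hist_eq_range_map (fA : ℕ → ℕ → Bool) (e t : ℕ) :
    hist fA e t = (List.range t).map (P fA e) := by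
  induction t with
  | zero => simp [hist]
  | succ t ih => simp [hist, List.range_succ, ih, P]

theorem hist_length (fA : ℕ → ℕ → Bool) (e t : ℕ) : (hist fA e t).length = t := by
  simp [hist_eq_range_map]

theorem look_hist (fA : ℕ → ℕ → Bool) (e : ℕ) {t' t : ℕ} (h : t' < t) :
    look (hist fA e t) t' = P fA e t' := by
  simp [look, hist_eq_range_map, List.getElem?_map, List.getElem?_range h]

section computable

theorem computable_band {α} [Primcodable α] {f g : α → Bool} (hf : Computable f)
    (hg : Computable g) : Computable fun a => f a && g a := by
  have := Computable.cond hf hg (Computable.const false)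
  exact this.of_eq fun a => by cases f a <;> simp

theorem computable_bor {α} [Primcodable α] {f g : α → Bool} (hf : Computable f)
    (hg : Computable g) : Computable fun a => f a || g a := by
  have := Computable.cond hf (Computable.const true) hg
  exact this.of_eq fun a => by cases f a <;> simp

theorem computable_bnot {α} [Primcodable α] {f : α → Bool} (hf : Computable f) :
    Computable fun a => !(f a) := by
  have := Computable.cond hf (Computable.const false) (Computable.const true)
  exact this.of_eq fun a => by cases f a <;> simp

theorem computable_bAll {α} [Primcodable α] {n : α → ℕ} {p : α → ℕ → Bool}
    (hn : Computable n) (hp : Computable₂ p) : Computable fun a => bAll (n a) (p a) := by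
  have h : Computable₂ fun (a : α) (s : ℕ × Bool) => s.2 && p a s.1 :=
    computable_band (Computable.snd.comp Computable.snd)
      (hp.comp Computable.fst (Computable.fst.comp Computable.snd))
  have := Computable.nat_rec hn (Computable.const true) h
  exact this.of_eq fun a => by
    induction n a with
    | zero => simp [bAll]
    | succ k ih => simpa [bAll] using congrArg (· && p a k) ih

theorem computable_look : Computable₂ look :=
  Computable.option_getD (Computable.list_getElem?.comp Computable.fst Computable.snd)
    (Computable.const false)

/-- uncurried img -/
def img' (x : ℕ × ℕ × ℕ) : ℕ := img x.1 x.2.1 x.2.2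

theorem computable_img : Computable img' := by
  have h1 : Computable fun x : ℕ × ℕ × ℕ =>
      ((x.2.1, Denumerable.ofNat Code (x.1 / 2)), Nat.pair x.1 x.2.2) :=
    Computable.pair
      (Computable.pair (Computable.fst.comp Computable.snd)
        ((Computable.ofNat Code).comp
          ((Primrec.nat_div.comp .id (.const 2)).to_comp.comp Computable.fst)))
      (Primrec₂.natPair.to_comp.comp Computable.fst (Computable.snd.comp Computable.snd))
  have h2 := primrec_evaln.to_comp.comp h1
  exact Computable.option_getD h2
    (Computable.succ.comp (Computable.fst.comp Computable.snd))

theorem computable_img_comp {α} [Primcodable α] {e t u : α → ℕ} (he : Computable e)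
    (ht : Computable t) (hu : Computable u) : Computable fun a => img (e a) (t a) (u a) :=
  (computable_img.comp (he.pair (ht.pair hu)) : Computable fun a => img' (e a, t a, u a))

end computable

end Stmt10Aux

namespace Stmt10Aux

open Nat.Partrec (Code)
open Nat.Partrec.Code

section computable2
variable {fA : ℕ → ℕ → Bool}

set_option maxHeartbeats 1000000 in
theorem computable_step (hfA : Computable₂ fA) :
    Computable fun a : ℕ × List Bool => step fA a.1 a.2.length a.2 := by
  -- abbreviations
  have ce : Computable fun a : ℕ × List Bool => a.1 := Computable.fst
  have ct : Computable fun a : ℕ × List Bool => a.2.length :=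
    Computable.list_length.comp Computable.snd
  have hle : Computable₂ fun a b : ℕ => decide (a ≤ b) := Primrec.nat_le.decide.to_comp
  have heq : Computable₂ fun a b : ℕ => decide (a = b) := Primrec.eq.decide.to_comp
  -- innermost predicate, on ((a, t1), t2)
  have he' : Computable fun q : ((ℕ × List Bool) × ℕ) × ℕ => q.1.1.1 := ce.comp (Computable.fst.comp Computable.fst)
  have ht' : Computable fun q : ((ℕ × List Bool) × ℕ) × ℕ => q.1.1.2.length :=
    ct.comp (Computable.fst.comp Computable.fst)
  have hh' : Computable fun q : ((ℕ × List Bool) × ℕ) × ℕ => q.1.1.2 :=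
    Computable.snd.comp (Computable.fst.comp Computable.fst)
  have ht1 : Computable fun q : ((ℕ × List Bool) × ℕ) × ℕ => q.1.2 := Computable.snd.comp Computable.fst
  have ht2 : Computable fun q : ((ℕ × List Bool) × ℕ) × ℕ => q.2 := Computable.snd
  have himg1 : Computable fun q : ((ℕ × List Bool) × ℕ) × ℕ => img q.1.1.1 q.1.1.2.length q.1.2 :=
    computable_img_comp he' ht' ht1
  have himg2 : Computable fun q : ((ℕ × List Bool) × ℕ) × ℕ => img q.1.1.1 q.1.1.2.length q.2 :=
    computable_img_comp he' ht' ht2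
  have hinner : Computable fun q : ((ℕ × List Bool) × ℕ) × ℕ =>
      !(look q.1.1.2 q.2) ||
        ((decide (q.1.2 = q.2) || !(decide (img q.1.1.1 q.1.1.2.length q.1.2 =
            img q.1.1.1 q.1.1.2.length q.2))) &&
          fA (img q.1.1.1 q.1.1.2.length q.1.2) (img q.1.1.1 q.1.1.2.length q.2)) :=
    computable_bor (computable_bnot (computable_look.comp hh' ht2))
      (computable_band
        (computable_bor (heq.comp ht1 ht2) (computable_bnot (heq.comp himg1 himg2)))
        (hfA.comp himg1 himg2))
  -- middle predicate, on (a, t1)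
  have hhm : Computable fun p : ((ℕ × List Bool) × ℕ) => p.1.2 := Computable.snd.comp Computable.fst
  have htm : Computable fun p : ((ℕ × List Bool) × ℕ) => p.1.2.length := ct.comp Computable.fst
  have ht1m : Computable fun p : ((ℕ × List Bool) × ℕ) => p.2 := Computable.snd
  have himgm : Computable fun p : ((ℕ × List Bool) × ℕ) => img p.1.1 p.1.2.length p.2 :=
    computable_img_comp (ce.comp Computable.fst) htm ht1m
  have hmid : Computable fun p : ((ℕ × List Bool) × ℕ) =>
      !(look p.1.2 p.2) ||
        (decide (img p.1.1 p.1.2.length p.2 ≤ p.1.2.length) &&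
          bAll p.1.2.length fun t2 =>
            !(look p.1.2 t2) ||
              ((decide (p.2 = t2) || !(decide (img p.1.1 p.1.2.length p.2 =
                  img p.1.1 p.1.2.length t2))) &&
                fA (img p.1.1 p.1.2.length p.2) (img p.1.1 p.1.2.length t2)) ) :=
    computable_bor (computable_bnot (computable_look.comp hhm ht1m))
      (computable_band (hle.comp himgm htm) (computable_bAll htm hinner.to₂))
  -- outer
  have houter : Computable fun a : ℕ × List Bool =>
      bAll a.2.length fun t1 =>
        !(look a.2 t1) ||
          (decide (img a.1 a.2.length t1 ≤ a.2.length) &&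
            bAll a.2.length fun t2 =>
              !(look a.2 t2) ||
                ((decide (t1 = t2) || !(decide (img a.1 a.2.length t1 =
                    img a.1 a.2.length t2))) &&
                  fA (img a.1 a.2.length t1) (img a.1 a.2.length t2)) ) :=
    computable_bAll ct hmid.to₂
  have hif := Computable.cond
    ((heq.comp (Primrec.nat_mod.to_comp.comp ce (Computable.const 2)) (Computable.const 1)))
    (hle.comp ct (Primrec.nat_div.to_comp.comp ce (Computable.const 2)))
    (Computable.cond (heq.comp ct (Computable.const 0)) (Computable.const true) houter)
  exact hif.of_eq fun a => by
    simp only [step]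
    by_cases h1 : a.1 % 2 = 1 <;> by_cases h2 : a.2.length = 0 <;> simp [h1, h2]

theorem computable_P (hfA : Computable₂ fA) : Computable₂ (P fA) := by
  have hg : Computable₂ fun (e : ℕ) (h : List Bool) => Option.some (step fA e h.length h) :=
    (Computable.option_some.comp (computable_step hfA)).to₂
  exact Computable.nat_strong_rec (P fA) hg fun e n => by
    rw [← hist_eq_range_map, hist_length]; rfl

end computable2

end Stmt10Aux

namespace Stmt10Aux

open Nat.Partrec (Code)
open Nat.Partrec.Code

variable (fA : ℕ → ℕ → Bool)

theorem P_zero (e : ℕ) : P fA e 0 = true := by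
  by_cases h : e % 2 = 1 <;> simp [P, step, h]

theorem P_odd {e : ℕ} (he : e % 2 = 1) (t : ℕ) : P fA e t = decide (t ≤ e / 2) := by
  simp [P, step, he]

theorem img_eq_of_le {e t t' : ℕ} (h : img e t t' ≤ t) :
    evaln t (Denumerable.ofNat Code (e / 2)) (Nat.pair e t') = some (img e t t') := by
  unfold img at *
  cases hc : evaln t (Denumerable.ofNat Code (e / 2)) (Nat.pair e t') with
  | none => rw [hc] at h; simp at h
  | some v => rw [hc] at *; simp

theorem P_even_pos_iff {e t : ℕ} (he : ¬ e % 2 = 1) (ht : t ≠ 0) :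
    P fA e t = true ↔ ∀ t1, t1 < t → P fA e t1 = true →
      img e t t1 ≤ t ∧ ∀ t2, t2 < t → P fA e t2 = true →
        (t1 = t2 ∨ img e t t1 ≠ img e t t2) ∧ fA (img e t t1) (img e t t2) = true := by
  have h0 : P fA e t = bAll t fun t1 =>
      !(look (hist fA e t) t1) ||
        (decide (img e t t1 ≤ t) &&
          bAll t fun t2 =>
            !(look (hist fA e t) t2) ||
              ((decide (t1 = t2) || !(decide (img e t t1 = img e t t2))) &&
                fA (img e t t1) (img e t t2))) := by
    simp [P, step, he, ht]
  rw [h0, bAll_iff]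
  refine forall₂_congr fun t1 h1 => ?_
  rw [look_hist fA e h1]
  simp only [Bool.or_eq_true, Bool.not_eq_true', Bool.and_eq_true, decide_eq_true_eq, bAll_iff]
  constructor
  · rintro (hf | ⟨hle, hin⟩) hP1
    · rw [hP1] at hf; cases hf
    · refine ⟨hle, fun t2 h2 hP2 => ?_⟩
      have h' := hin t2 h2
      rw [look_hist fA e h2] at h'
      simp only [Bool.or_eq_true, Bool.not_eq_true', Bool.and_eq_true, decide_eq_true_eq,
        Bool.not_eq_true, decide_eq_false_iff_not] at h'
      rcases h' with hf | h'
      · rw [hP2] at hf; cases hf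
      · exact ⟨h'.1, h'.2⟩
  · intro h
    cases hP1 : P fA e t1 with
    | false => exact Or.inl rfl
    | true =>
      obtain ⟨hle, hin⟩ := h hP1
      refine Or.inr ⟨hle, fun t2 h2 => ?_⟩
      rw [look_hist fA e h2]
      cases hP2 : P fA e t2 with
      | false => simp
      | true =>
        obtain ⟨hd, hfa⟩ := hin t2 h2 hP2
        simp only [Bool.or_eq_true, Bool.not_eq_true', Bool.and_eq_true, decide_eq_true_eq,
          Bool.not_eq_true, decide_eq_false_iff_not]
        exact Or.inr ⟨by tauto, hfa⟩

end Stmt10Aux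



namespace Stmt10Aux

open Nat.Partrec (Code)
open Nat.Partrec.Code

variable (fA : ℕ → ℕ → Bool)

theorem G_even_finite {A : ℕ → ℕ → Prop}
    (hfA : ∀ x y, A x y ↔ fA x y = true) (hAfin : ∀ a, (classOf A a).Finite)
    {e : ℕ} (he : ¬ e % 2 = 1) : {t | P fA e t = true}.Finite := by
  by_contra hinf
  rw [← Set.not_infinite, not_not] at hinf
  obtain ⟨t1, ht1G, ht1pos⟩ := hinf.exists_gt 0
  have h1 := (P_even_pos_iff fA he (by omega)).1 ht1G 0 ht1pos (P_zero fA e)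
  have hv0 : img e t1 0 ∈ eval (Denumerable.ofNat Code (e / 2)) (Nat.pair e 0) :=
    evaln_sound (Option.mem_def.mpr (img_eq_of_le h1.1))
  set v0 := img e t1 0 with hv0def
  have hDfin := hAfin v0
  set m := (classOf A v0).ncard with hm
  obtain ⟨F, hFsub, hFcard⟩ := hinf.exists_subset_card_eq (m + 1)
  obtain ⟨t, htG, htgt⟩ := hinf.exists_gt (F.sup id)
  have htpos : t ≠ 0 := by omega
  have hcond := (P_even_pos_iff fA he htpos).1 htG
  have h00 := hcond 0 (by omega) (P_zero fA e)
  have hv0' : img e t 0 = v0 :=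
    Part.mem_unique (evaln_sound (Option.mem_def.mpr (img_eq_of_le h00.1))) hv0
  set S : Set ℕ := {t' | P fA e t' = true} ∩ Set.Iio t with hS
  have hmaps : ∀ t' ∈ S, img e t t' ∈ classOf A v0 := by
    rintro t' ⟨hP, hlt⟩
    have h' := (hcond t' hlt hP).2 0 (by omega) (P_zero fA e)
    have h2 := h'.2
    rw [hv0'] at h2
    exact (hfA _ _).2 h2
  have hinj : Set.InjOn (img e t) S := by
    rintro a ⟨hPa, hla⟩ b ⟨hPb, hlb⟩ hab
    by_contra hne
    rcases ((hcond a hla hPa).2 b hlb hPb).1 with h | h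
    · exact hne h
    · exact h hab
  have hSfin : S.Finite := (Set.finite_Iio t).subset Set.inter_subset_right
  have hcard : S.ncard ≤ m :=
    Set.ncard_le_ncard_of_injOn (img e t) hmaps hinj hDfin
  have hsub : (F : Set ℕ) ⊆ S := fun x hx =>
    ⟨hFsub hx, lt_of_le_of_lt (Finset.le_sup (f := id) hx) htgt⟩
  have hge : m + 1 ≤ S.ncard := by
    rw [← hFcard, ← Set.ncard_coe_finset]
    exact Set.ncard_le_ncard hsub hSfin
  omega

/-- The diagonal equivalence relation. -/
def Brel : ℕ → ℕ → Prop := fun x y =>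
  x = y ∨ ((Nat.unpair x).1 = (Nat.unpair y).1 ∧
    P fA (Nat.unpair x).1 (Nat.unpair x).2 = true ∧
    P fA (Nat.unpair y).1 (Nat.unpair y).2 = true)

theorem Brel_equiv : Equivalence (Brel fA) := by
  constructor
  · intro x; exact Or.inl rfl
  · rintro x y (rfl | ⟨h1, h2, h3⟩); exacts [Or.inl rfl, Or.inr ⟨h1.symm, h3, h2⟩]
  · rintro x y z (rfl | ⟨h1, h2, h3⟩) h'
    · exact h'
    · rcases h' with rfl | ⟨h1', h2', h3'⟩
      · exact Or.inr ⟨h1, h2, h3⟩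
      · exact Or.inr ⟨h1.trans h1', h2, h3'⟩

theorem pair_injective (e : ℕ) : Function.Injective (Nat.pair e) := fun a b h => by
  have := congrArg (fun n => (Nat.unpair n).2) h
  simpa using this

theorem classOf_B_of_P {x : ℕ} (hP : P fA (Nat.unpair x).1 (Nat.unpair x).2 = true) :
    classOf (Brel fA) x =
      Nat.pair (Nat.unpair x).1 '' {t | P fA (Nat.unpair x).1 t = true} := by
  ext y
  constructor
  · rintro (rfl | ⟨h1, hy, hx⟩)
    · exact ⟨(Nat.unpair y).2, hP, Nat.pair_unpair y⟩
    · exact ⟨(Nat.unpair y).2, by rw [← h1]; exact hy, by rw [← h1]; exact Nat.pair_unpair y⟩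
  · rintro ⟨t, hPt, rfl⟩
    exact Or.inr ⟨by simp, by simpa using hPt, hP⟩

theorem classOf_B_of_not_P {x : ℕ} (hP : ¬ P fA (Nat.unpair x).1 (Nat.unpair x).2 = true) :
    classOf (Brel fA) x = {x} := by
  ext y
  constructor
  · rintro (rfl | ⟨h1, hy, hx⟩)
    · rfl
    · exact absurd hx hP
  · rintro rfl; exact Or.inl rfl

theorem classOf_generic {E : ℕ → ℕ → Prop} (hE : Equivalence E) {x y : ℕ} (h : E x y) :
    classOf E x = classOf E y :=
  Set.ext fun z => ⟨fun hz => hE.trans hz h, fun hz => hE.trans hz (hE.symm h)⟩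

theorem mem_classOf_self {E : ℕ → ℕ → Prop} (hE : Equivalence E) (x : ℕ) :
    x ∈ classOf E x := hE.refl x

end Stmt10Aux


namespace Stmt10Aux

theorem nodup_getD_inj {l : List ℕ} (hnd : l.Nodup) {i j : ℕ}
    (hi : i < l.length) (hj : j < l.length) (h : l.getD i 0 = l.getD j 0) : i = j := by
  rw [List.getD_eq_getElem _ _ hi, List.getD_eq_getElem _ _ hj] at h
  exact (List.Nodup.getElem_inj_iff hnd).1 h

theorem rank_lt_card {E : ℕ → ℕ → Prop} (hE : Equivalence E) {x : ℕ}
    (hfin : (classOf E x).Finite) :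
    (classOf E x ∩ Set.Iio x).ncard < (classOf E x).ncard := by
  apply Set.ncard_lt_ncard _ hfin
  rw [Set.ssubset_def]
  exact ⟨Set.inter_subset_left, fun hsub => lt_irrefl x (hsub (mem_classOf_self hE x)).2⟩

theorem rank_strictMono {E : ℕ → ℕ → Prop} (hE : Equivalence E) {x y : ℕ}
    (hfin : (classOf E y).Finite) (hxy : E x y) (hlt : x < y) :
    (classOf E x ∩ Set.Iio x).ncard < (classOf E y ∩ Set.Iio y).ncard := by
  have hcl : classOf E x = classOf E y := classOf_generic hE hxy
  rw [hcl]
  apply Set.ncard_lt_ncard _ (hfin.subset Set.inter_subset_left)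
  rw [Set.ssubset_def]
  constructor
  · exact Set.inter_subset_inter_right _ (Set.Iio_subset_Iio hlt.le)
  · intro hsub
    have hxmem : x ∈ classOf E y ∩ Set.Iio y := ⟨hcl ▸ mem_classOf_self hE x, hlt⟩
    exact lt_irrefl x (hsub hxmem).2

theorem rank_inj_on_class {E : ℕ → ℕ → Prop} (hE : Equivalence E) {x y : ℕ}
    (hfinx : (classOf E x).Finite) (hfiny : (classOf E y).Finite) (hxy : E x y)
    (h : (classOf E x ∩ Set.Iio x).ncard = (classOf E y ∩ Set.Iio y).ncard) : x = y := by
  rcases lt_trichotomy x y with hlt | heq | hlt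
  · exact absurd h (Nat.ne_of_lt (rank_strictMono hE hfiny hxy hlt))
  · exact heq
  · exact absurd h.symm (Nat.ne_of_lt (rank_strictMono hE hfinx (hE.symm hxy) hlt))

end Stmt10Aux

/-- If `A` is a computable equivalence structure having exactly one class of each
finite positive size (and only finite classes), then there is a computable
equivalence structure `B` with only finite classes and classes of arbitrarily large
size (hence bi-embeddable with `A`) such that no embedding of `B` into `A` is
computable. -/
theorem stmt10 (A : ℕ → ℕ → Prop) (hA : Equivalence A) (hAc : CompDecRel A)
    (hAfin : ∀ a, (classOf A a).Finite)
    (hsizes : ∀ n, 1 ≤ n → ∃! C : Set ℕ, (∃ a, C = classOf A a) ∧ C.ncard = n) :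
    ∃ B : ℕ → ℕ → Prop, Equivalence B ∧ CompDecRel B ∧
      (∀ a, (classOf B a).Finite) ∧ UnboundedCharacter B ∧
      BiEmb B A ∧
      (∀ f, IsEmb B A f → ¬ Computable f) := by
  classical
  obtain ⟨fA, hfAc, hfA⟩ := hAc
  set B : ℕ → ℕ → Prop := Stmt10Aux.Brel fA with hBdef
  have hB : Equivalence B := Stmt10Aux.Brel_equiv fA
  -- finiteness of the index sets
  have hGfin : ∀ e, {t | Stmt10Aux.P fA e t = true}.Finite := by
    intro e
    by_cases he : e % 2 = 1
    · apply (Set.finite_Iic (e / 2)).subset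
      intro t ht
      simp only [Set.mem_setOf_eq, Stmt10Aux.P_odd fA he] at ht
      exact of_decide_eq_true ht
    · exact Stmt10Aux.G_even_finite fA hfA hAfin he
  -- all B-classes are finite
  have hBfin : ∀ a, (classOf B a).Finite := by
    intro a
    by_cases hP : Stmt10Aux.P fA (Nat.unpair a).1 (Nat.unpair a).2 = true
    · rw [hBdef, Stmt10Aux.classOf_B_of_P fA hP]
      exact (hGfin _).image _
    · rw [hBdef, Stmt10Aux.classOf_B_of_not_P fA hP]
      exact Set.finite_singleton a
  -- basic facts about A
  have hAmem : ∀ x, x ∈ classOf A x := Stmt10Aux.mem_classOf_self hA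
  have hn1 : ∀ a : ℕ, 1 ≤ (classOf A a).ncard := fun a =>
    (Set.ncard_pos (hAfin a)).2 ⟨a, hAmem a⟩
  have huniq : ∀ x y : ℕ, (classOf A x).ncard = (classOf A y).ncard →
      classOf A x = classOf A y := by
    intro x y h
    obtain ⟨C, _, hCuniq⟩ := hsizes _ (hn1 x)
    have e1 := hCuniq (classOf A x) ⟨⟨x, rfl⟩, rfl⟩
    have e2 := hCuniq (classOf A y) ⟨⟨y, rfl⟩, h.symm⟩
    rw [e1, e2]
  have hAofclass : ∀ x y : ℕ, classOf A x = classOf A y → A x y := by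
    intro x y h
    have := hAmem x
    rw [h] at this
    exact this
  refine ⟨B, hB, ?_, hBfin, ?_, ⟨?_, ?_⟩, ?_⟩
  · -- CompRel B
    refine ⟨fun x y => decide (x = y) ||
      (decide ((Nat.unpair x).1 = (Nat.unpair y).1) &&
        (Stmt10Aux.P fA (Nat.unpair x).1 (Nat.unpair x).2 &&
         Stmt10Aux.P fA (Nat.unpair y).1 (Nat.unpair y).2)), ?_, ?_⟩
    · have heq : Computable₂ fun a b : ℕ => decide (a = b) := Primrec.eq.decide.to_comp
      have hux1 : Computable fun p : ℕ × ℕ => (Nat.unpair p.1).1 :=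
        Computable.fst.comp (Computable.unpair.comp Computable.fst)
      have hux2 : Computable fun p : ℕ × ℕ => (Nat.unpair p.1).2 :=
        Computable.snd.comp (Computable.unpair.comp Computable.fst)
      have huy1 : Computable fun p : ℕ × ℕ => (Nat.unpair p.2).1 :=
        Computable.fst.comp (Computable.unpair.comp Computable.snd)
      have huy2 : Computable fun p : ℕ × ℕ => (Nat.unpair p.2).2 :=
        Computable.snd.comp (Computable.unpair.comp Computable.snd)
      exact Stmt10Aux.computable_bor (heq.comp Computable.fst Computable.snd)
        (Stmt10Aux.computable_band (heq.comp hux1 huy1)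
          (Stmt10Aux.computable_band
            ((Stmt10Aux.computable_P hfAc).comp hux1 hux2)
            ((Stmt10Aux.computable_P hfAc).comp huy1 huy2)))
    · intro x y
      rw [hBdef]
      simp only [Stmt10Aux.Brel, Bool.or_eq_true, decide_eq_true_eq, Bool.and_eq_true]
  · -- Unbounded character
    intro k
    have he : (2 * k + 1) % 2 = 1 := by omega
    have hdiv : (2 * k + 1) / 2 = k := by omega
    have hP0 : Stmt10Aux.P fA (2 * k + 1) 0 = true := by
      rw [Stmt10Aux.P_odd fA he]; simp
    have hset : {t | Stmt10Aux.P fA (2 * k + 1) t = true} = Set.Iic k := by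
      ext t; simp [Stmt10Aux.P_odd fA he, hdiv]
    have hcl : classOf B (Nat.pair (2 * k + 1) 0) = Nat.pair (2 * k + 1) '' Set.Iic k := by
      have h1 := Stmt10Aux.classOf_B_of_P fA (x := Nat.pair (2 * k + 1) 0)
        (by simpa [Nat.unpair_pair] using hP0)
      rw [hBdef]
      simpa [Nat.unpair_pair, hset] using h1
    refine ⟨Nat.pair (2 * k + 1) 0, hBfin _, ?_⟩
    rw [hcl, Set.ncard_image_of_injective _ (Stmt10Aux.pair_injective _)]
    rw [show (Set.Iic k) = ↑(Finset.Iic k) by simp, Set.ncard_coe_finset, Nat.card_Iic]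
    omega
  · -- embedding of B into A
    have hrepex : ∀ n, ∃ a, 1 ≤ n → (classOf A a).ncard = n := by
      intro n
      by_cases hn : 1 ≤ n
      · obtain ⟨C, ⟨⟨a, rfl⟩, hc⟩, _⟩ := hsizes n hn
        exact ⟨a, fun _ => hc⟩
      · exact ⟨0, fun h => absurd h hn⟩
    choose aRep haRep using hrepex
    set rB : ℕ → ℕ := fun x => sInf (classOf B x) with hrBdef
    have hrB_mem : ∀ x, rB x ∈ classOf B x := fun x =>
      Nat.sInf_mem ⟨x, Stmt10Aux.mem_classOf_self hB x⟩
    have hrB_class : ∀ x, classOf B (rB x) = classOf B x := fun x =>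
      Stmt10Aux.classOf_generic hB (hrB_mem x)
    have hclass_of_B : ∀ x y, B x y → classOf B x = classOf B y := fun x y h =>
      Stmt10Aux.classOf_generic hB h
    have hB_of_class : ∀ x y, classOf B x = classOf B y → B x y := by
      intro x y h
      have := Stmt10Aux.mem_classOf_self hB x
      rw [h] at this
      exact this
    have hrB_eq : ∀ x y, B x y → rB x = rB y := fun x y h => by
      rw [hrBdef]; simp only; rw [hclass_of_B x y h]
    set M : ℕ → ℕ := fun r => (Finset.range (r + 1)).sup fun r' => (classOf B r').ncard
      with hMdef
    set sz : ℕ → ℕ := fun x => M (rB x) + rB x + 1 with hszdef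
    have hszrfl : ∀ x, sz x = M (rB x) + rB x + 1 := fun _ => rfl
    have hsz_pos : ∀ x, 1 ≤ sz x := fun x => by have := hszrfl x; omega
    have hsz_gt : ∀ x, (classOf B x).ncard < sz x := by
      intro x
      have h1 : (classOf B (rB x)).ncard ≤ M (rB x) :=
        Finset.le_sup (f := fun r' => (classOf B r').ncard)
          (Finset.mem_range.2 (Nat.lt_succ_self _))
      rw [hrB_class] at h1
      have := hszrfl x
      omega
    have hsz_mono : ∀ u v, rB u < rB v → sz u < sz v := by
      intro u v h
      have hM : M (rB u) ≤ M (rB v) := Finset.sup_mono (Finset.range_subset_range.2 (by omega))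
      have := hszrfl u; have := hszrfl v
      omega
    have hsz_eq_of_B : ∀ x y, B x y → sz x = sz y := by
      intro x y h
      have hr := hrB_eq x y h
      have hM : M (rB x) = M (rB y) := by rw [hr]
      have := hszrfl x; have := hszrfl y
      omega
    have hsz_ne : ∀ x y, ¬ B x y → sz x ≠ sz y := by
      intro x y h
      have hne : rB x ≠ rB y := by
        intro heq
        apply h
        apply hB_of_class
        rw [← hrB_class x, ← hrB_class y, heq]
      rcases lt_trichotomy (rB x) (rB y) with hlt | heq | hlt
      · exact Nat.ne_of_lt (hsz_mono _ _ hlt)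
      · exact absurd heq hne
      · exact (Nat.ne_of_lt (hsz_mono _ _ hlt)).symm
    set L : ℕ → List ℕ := fun x => ((hAfin (aRep (sz x))).toFinset.sort (· ≤ ·)) with hLdef
    have hLlen : ∀ x, (L x).length = sz x := by
      intro x
      rw [hLdef]
      simp only [Finset.length_sort]
      rw [← Set.ncard_eq_toFinset_card _ (hAfin (aRep (sz x)))]
      exact haRep (sz x) (hsz_pos x)
    have hL_eq_of_B : ∀ x y, B x y → L x = L y := fun x y h => by
      rw [hLdef]; simp only; congr 1; rw [hsz_eq_of_B x y h]
    set rkB : ℕ → ℕ := fun x => (classOf B x ∩ Set.Iio x).ncard with hrkBdef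
    have hrkB_lt : ∀ x, rkB x < sz x := fun x =>
      lt_trans (Stmt10Aux.rank_lt_card hB (hBfin x)) (hsz_gt x)
    set f : ℕ → ℕ := fun x => (L x).getD (rkB x) 0 with hfdef
    have hfmem : ∀ x, f x ∈ classOf A (aRep (sz x)) := by
      intro x
      have h : rkB x < (L x).length := by rw [hLlen]; exact hrkB_lt x
      have e : f x = (L x)[rkB x]'h := List.getD_eq_getElem _ _ h
      rw [e]
      have hmem : (L x)[rkB x]'h ∈ L x := List.getElem_mem h
      have : (L x)[rkB x]'h ∈ (hAfin (aRep (sz x))).toFinset := by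
        rw [← Finset.mem_sort (α := ℕ) (· ≤ ·)]
        exact hmem
      simpa [Set.Finite.mem_toFinset] using this
    have hfclass : ∀ x, classOf A (f x) = classOf A (aRep (sz x)) := fun x =>
      Stmt10Aux.classOf_generic hA (hfmem x)
    refine ⟨f, ?_, ?_⟩
    · -- injectivity
      intro x y hxy
      by_cases hBxy : B x y
      · have hll : L x = L y := hL_eq_of_B x y hBxy
        have h1 : rkB x < (L x).length := by rw [hLlen]; exact hrkB_lt x
        have h2 : rkB y < (L x).length := by rw [hll, hLlen]; exact hrkB_lt y
        have hnd : (L x).Nodup := Finset.sort_nodup _ _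
        have hxy' : (L x).getD (rkB x) 0 = (L y).getD (rkB y) 0 := hxy
        rw [show L y = L x from hll.symm] at hxy'
        have : rkB x = rkB y := Stmt10Aux.nodup_getD_inj hnd h1 h2 hxy'
        exact Stmt10Aux.rank_inj_on_class hB (hBfin x) (hBfin y) hBxy this
      · exfalso
        have hA' : A (f x) (f y) := by rw [hxy]; exact hA.refl _
        have : classOf A (aRep (sz x)) = classOf A (aRep (sz y)) := by
          rw [← hfclass x, ← hfclass y]
          exact Stmt10Aux.classOf_generic hA hA'
        have hszeq : sz x = sz y := by
          have hx := haRep (sz x) (hsz_pos x)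
          have hy := haRep (sz y) (hsz_pos y)
          rw [← hx, ← hy, this]
        exact hsz_ne x y hBxy hszeq
    · -- equivalence preservation
      intro x y
      constructor
      · intro hBxy
        have hszeq := hsz_eq_of_B x y hBxy
        have h1 := hfmem x
        have h2 := hfmem y
        rw [hszeq] at h1
        exact hA.trans h1 (hA.symm h2)
      · intro hAxy
        by_contra hBxy
        have : classOf A (aRep (sz x)) = classOf A (aRep (sz y)) := by
          rw [← hfclass x, ← hfclass y]
          exact Stmt10Aux.classOf_generic hA hAxy
        have hszeq : sz x = sz y := by
          have hx := haRep (sz x) (hsz_pos x)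
          have hy := haRep (sz y) (hsz_pos y)
          rw [← hx, ← hy, this]
        exact hsz_ne x y hBxy hszeq
  · -- embedding of A into B
    set nA : ℕ → ℕ := fun a => (classOf A a).ncard with hnAdef
    set rkA : ℕ → ℕ := fun a => (classOf A a ∩ Set.Iio a).ncard with hrkAdef
    set g : ℕ → ℕ := fun a => Nat.pair (2 * (nA a - 1) + 1) (rkA a) with hgdef
    have hrow_odd : ∀ a : ℕ, (2 * (nA a - 1) + 1) % 2 = 1 := fun a => by omega
    have hrow_div : ∀ a : ℕ, (2 * (nA a - 1) + 1) / 2 = nA a - 1 := fun a => by omega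
    have hPg : ∀ a, Stmt10Aux.P fA (2 * (nA a - 1) + 1) (rkA a) = true := by
      intro a
      rw [Stmt10Aux.P_odd fA (hrow_odd a), hrow_div a]
      have h1 : rkA a < nA a := Stmt10Aux.rank_lt_card hA (hAfin a)
      have h2 := hn1 a
      simp only [decide_eq_true_eq]
      omega
    have hAn : ∀ x y, A x y → nA x = nA y := fun x y h => by
      rw [hnAdef]; simp only; rw [Stmt10Aux.classOf_generic hA h]
    have hrow_eq_A : ∀ x y, 2 * (nA x - 1) + 1 = 2 * (nA y - 1) + 1 → A x y := by
      intro x y h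
      have hx : 1 ≤ nA x := hn1 x
      have hy : 1 ≤ nA y := hn1 y
      have h1 : nA x = nA y := by omega
      exact hAofclass x y (huniq x y h1)
    refine ⟨g, ?_, ?_⟩
    · intro x y hxy
      have hgx : g x = Nat.pair (2 * (nA x - 1) + 1) (rkA x) := rfl
      have hgy : g y = Nat.pair (2 * (nA y - 1) + 1) (rkA y) := rfl
      rw [hgx, hgy] at hxy
      have h2 : 2 * (nA x - 1) + 1 = 2 * (nA y - 1) + 1 := by
        have := congrArg (fun n => (Nat.unpair n).1) hxy
        simpa [Nat.unpair_pair] using this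
      have h3 : rkA x = rkA y := by
        have := congrArg (fun n => (Nat.unpair n).2) hxy
        simpa [Nat.unpair_pair] using this
      have hAxy : A x y := hrow_eq_A x y h2
      exact Stmt10Aux.rank_inj_on_class hA (hAfin x) (hAfin y) hAxy h3
    · intro x y
      constructor
      · intro hAxy
        have hrow : 2 * (nA x - 1) + 1 = 2 * (nA y - 1) + 1 := by rw [hAn x y hAxy]
        right
        rw [hgdef]
        refine ⟨by simp [Nat.unpair_pair, hrow], ?_, ?_⟩
        · simpa [Nat.unpair_pair] using hPg x
        · simpa [Nat.unpair_pair] using hPg y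
      · intro hB'
        rcases hB' with heq | ⟨hrow, _, _⟩
        · have h2 := congrArg (fun n => (Nat.unpair n).1) heq
          rw [hgdef] at h2
          simp only [Nat.unpair_pair] at h2
          exact hrow_eq_A x y h2
        · rw [hgdef] at hrow
          simp only [Nat.unpair_pair] at hrow
          exact hrow_eq_A x y hrow
  · -- diagonalization
    intro f hemb hcomp
    obtain ⟨c, hc⟩ := Nat.Partrec.Code.exists_code.1 (Partrec.nat_iff.1 hcomp)
    set e : ℕ := 2 * Encodable.encode c with hedef
    have he : ¬ e % 2 = 1 := by omega
    have hcode : Denumerable.ofNat Nat.Partrec.Code (e / 2) = c := by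
      have : e / 2 = Encodable.encode c := by omega
      rw [this, Denumerable.ofNat_encode]
    have hGf := hGfin e
    obtain ⟨N, hN⟩ := hGf.bddAbove
    have hconv : ∀ t', ∃ k, f (Nat.pair e t') ∈
        Nat.Partrec.Code.evaln k c (Nat.pair e t') := by
      intro t'
      apply Nat.Partrec.Code.evaln_complete.1
      rw [hc]
      exact Part.mem_some _
    choose kf hkf using hconv
    set K : ℕ := (Finset.range (N + 1)).sup kf with hKdef
    set V : ℕ := (Finset.range (N + 1)).sup fun t' => f (Nat.pair e t') with hVdef
    set t : ℕ := K + V + N + 1 with htdef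
    have himg : ∀ t', t' ≤ N → Stmt10Aux.img e t t' = f (Nat.pair e t') := by
      intro t' ht'
      have hk : kf t' ≤ t := by
        have := Finset.le_sup (f := kf) (Finset.mem_range.2 (by omega : t' < N + 1))
        omega
      have := Nat.Partrec.Code.evaln_mono hk (hkf t')
      rw [Stmt10Aux.img, hcode]
      rw [Option.mem_def.1 this]
      rfl
    have hmemN : ∀ t', Stmt10Aux.P fA e t' = true → t' ≤ N := fun t' h =>
      hN (Set.mem_setOf_eq ▸ h)
    have hPB : ∀ t1 t2, Stmt10Aux.P fA e t1 = true → Stmt10Aux.P fA e t2 = true →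
        B (Nat.pair e t1) (Nat.pair e t2) := by
      intro t1 t2 h1 h2
      right
      refine ⟨?_, ?_, ?_⟩ <;> simp [Nat.unpair_pair, h1, h2]
    have hPt : Stmt10Aux.P fA e t = true := by
      rw [Stmt10Aux.P_even_pos_iff fA he (by omega)]
      intro t1 _ hP1
      have ht1N := hmemN t1 hP1
      rw [himg t1 ht1N]
      constructor
      · have hV : f (Nat.pair e t1) ≤ V := by
          simpa using Finset.le_sup (f := fun t' => f (Nat.pair e t'))
            (Finset.mem_range.2 (by omega : t1 < N + 1))
        omega
      · intro t2 _ hP2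
        have ht2N := hmemN t2 hP2
        rw [himg t2 ht2N]
        constructor
        · by_cases h12 : t1 = t2
          · exact Or.inl h12
          · refine Or.inr fun hfe => h12 ?_
            have := hemb.1 hfe
            exact Stmt10Aux.pair_injective e this
        · exact (hfA _ _).1 ((hemb.2 _ _).1 (hPB t1 t2 hP1 hP2))
    have : t ≤ N := hmemN t hPt
    omega
end
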